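/- If r ∈ R is an element whose image ι(r) in A lies in the ideal of A generated by the classes x̄ and ȳ of x and y, then r ∈ tR. Consequently, if D̃ is a k-derivation of A mapping ι(R) into itself, then D̃(ι(t)) lies in ι(tR). -/

import Mathlib

/-!
Reducing the constant coefficient modulo `t` kills `x`, `y` and `xy - t`, so it descends to a
ring map `A → R/(t)` which vanishes on `(x̄, ȳ)` and restricts to the quotient map on `R`; this
gives the first claim. Since `ι t = x̄ ȳ`, the Leibniz rule puts `D̃ (ι t)` in `(x̄, ȳ)`, and if it
equals `ι r'` then `r' ∈ tR` by the first claim.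
-/

noncomputable section

/-- The ideal `(xy − t)` of `R[[x,y]]`, where `R[[x,y]]` is formalized as
`MvPowerSeries (Fin 2) R` with `x` the variable `0` and `y` the variable `1`. -/
def nodeIdeal (R : Type*) [CommRing R] (t : R) : Ideal (MvPowerSeries (Fin 2) R) :=
  Ideal.span
    {(MvPowerSeries.X 0 : MvPowerSeries (Fin 2) R) * MvPowerSeries.X 1 -
      (MvPowerSeries.C t : MvPowerSeries (Fin 2) R)}

/-- The complete local model `A = R[[x,y]]/(xy − t)` of a one-parameter smoothing
of a node. -/
abbrev NodeAlgebra (R : Type*) [CommRing R] (t : R) : Type _ :=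
  MvPowerSeries (Fin 2) R ⧸ nodeIdeal R t

theorem Derivation.map_mul_mem_span_pair {k A : Type*} [CommRing k] [CommRing A] [Algebra k A]
    (D : Derivation k A A) (a b : A) : D (a * b) ∈ Ideal.span {a, b} := by
  rw [Derivation.leibniz, smul_eq_mul, smul_eq_mul]
  exact Ideal.add_mem _ (Ideal.mul_mem_right _ _ (Ideal.subset_span (by simp)))
    (Ideal.mul_mem_right _ _ (Ideal.subset_span (by simp)))

namespace NodeAlgebra

open MvPowerSeries

variable {R : Type*} [CommRing R] (t : R)

theorem nodeIdeal_le_ker_constantCoeffMod :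
    nodeIdeal R t ≤
      RingHom.ker ((Ideal.Quotient.mk (Ideal.span {t})).comp (constantCoeff (R := R))) := by
  rw [nodeIdeal, Ideal.span_le, Set.singleton_subset_iff, SetLike.mem_coe, RingHom.mem_ker]
  simp

def constantCoeffMod : NodeAlgebra R t →+* R ⧸ Ideal.span {t} :=
  Ideal.Quotient.lift _ _ (fun _ hf => nodeIdeal_le_ker_constantCoeffMod t hf)

@[simp]
theorem constantCoeffMod_mk (f : MvPowerSeries (Fin 2) R) :
    constantCoeffMod t (Ideal.Quotient.mk _ f) = Ideal.Quotient.mk _ (constantCoeff f) :=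
  rfl

@[simp]
theorem constantCoeffMod_algebraMap (r : R) :
    constantCoeffMod t (algebraMap R (NodeAlgebra R t) r) = Ideal.Quotient.mk _ r :=
  constantCoeffMod_mk t (C r) |>.trans (by rw [constantCoeff_C])

theorem span_X_le_ker_constantCoeffMod :
    Ideal.span {Ideal.Quotient.mk (nodeIdeal R t) (X 0),
      Ideal.Quotient.mk (nodeIdeal R t) (X 1)} ≤ RingHom.ker (constantCoeffMod t) := by
  rw [Ideal.span_le, Set.insert_subset_iff, Set.singleton_subset_iff]
  simp [RingHom.mem_ker]

theorem mem_span_singleton_of_algebraMap_mem_span_X (r : R)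
    (hr : algebraMap R (NodeAlgebra R t) r ∈
      Ideal.span {Ideal.Quotient.mk (nodeIdeal R t) (X 0),
        Ideal.Quotient.mk (nodeIdeal R t) (X 1)}) :
    r ∈ Ideal.span {t} := by
  have hr_ker := span_X_le_ker_constantCoeffMod t hr
  rwa [RingHom.mem_ker, constantCoeffMod_algebraMap, Ideal.Quotient.eq_zero_iff_mem] at hr_ker

theorem algebraMap_eq_mk_X_mul_mk_X :
    algebraMap R (NodeAlgebra R t) t =
      Ideal.Quotient.mk (nodeIdeal R t) (X 0) * Ideal.Quotient.mk (nodeIdeal R t) (X 1) := by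
  rw [← map_mul]
  exact (Ideal.Quotient.eq.2 (Ideal.subset_span (Set.mem_singleton _))).symm

end NodeAlgebra

open NodeAlgebra in
theorem stmt7 (k R : Type*) [CommRing k] [CommRing R] [Algebra k R] (t : R) :
    (∀ r : R,
      algebraMap R (NodeAlgebra R t) r ∈
        Ideal.span {Ideal.Quotient.mk (nodeIdeal R t) (MvPowerSeries.X 0),
          Ideal.Quotient.mk (nodeIdeal R t) (MvPowerSeries.X 1)} →
      r ∈ Ideal.span ({t} : Set R)) ∧
    (∀ Dt : Derivation k (NodeAlgebra R t) (NodeAlgebra R t),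
      (∀ r : R, ∃ r' : R,
        Dt (algebraMap R (NodeAlgebra R t) r) = algebraMap R (NodeAlgebra R t) r') →
      ∃ s : R, Dt (algebraMap R (NodeAlgebra R t) t) = algebraMap R (NodeAlgebra R t) (t * s)) := by
  refine ⟨mem_span_singleton_of_algebraMap_mem_span_X t, fun Dt hDt => ?_⟩
  obtain ⟨r, hr⟩ := hDt t
  have hr_mem : r ∈ Ideal.span {t} := by
    refine mem_span_singleton_of_algebraMap_mem_span_X t r ?_
    rw [← hr, algebraMap_eq_mk_X_mul_mk_X]
    exact Dt.map_mul_mem_span_pair _ _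
  obtain ⟨s, rfl⟩ := Ideal.mem_span_singleton.1 hr_mem
  exact ⟨s, hr⟩
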